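/- Let P be an orthomodular poset of finite height. Then the orthomodular poset can be recovered from its implication operator: for all x, y ∈ P, x ≤ y holds if and only if x → y = {1}, and for every x ∈ P, x → 0 = {x'}; consequently the bounded poset structure, the orthocomplementation and hence the whole orthomodular poset assigned to the implication operator coincide with the original one (P(I(P)) = P). -/

import Mathlib

/-- An orthomodular poset: a bounded poset with an antitone involution `compl`
that is a complementation (⊤ is the LUB and ⊥ the GLB of `{x, compl x}`),
in which joins of orthogonal pairs exist, satisfying the orthomodular law. -/
structure OrthomodularPoset (P : Type*) [PartialOrder P] [BoundedOrder P] where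
  compl : P → P
  antitone : ∀ x y : P, x ≤ y → compl y ≤ compl x
  involution : ∀ x : P, compl (compl x) = x
  lub_compl : ∀ x : P, IsLUB {x, compl x} ⊤
  glb_compl : ∀ x : P, IsGLB {x, compl x} ⊥
  join_of_orth : ∀ x y : P, x ≤ compl y → ∃ j : P, IsLUB {x, y} j
  orthomodular : ∀ x y j k : P, x ≤ y → IsLUB {compl y, x} j →
    IsLUB {compl j, x} k → k = y

/-- A poset is of finite height if every chain is finite. -/
def FiniteHeight (P : Type*) [PartialOrder P] : Prop :=
  ∀ C : Set P, IsChain (· ≤ ·) C → C.Finite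

/-- `Max A`: the set of maximal elements of `A`. -/
def maxElems {P : Type*} [PartialOrder P] (A : Set P) : Set P :=
  {m | m ∈ A ∧ ∀ x ∈ A, m ≤ x → m = x}

/-- The implication operator: `x → y := {y ∨ m | m ∈ Max L(x', y')}`,
where `y ∨ m` is expressed via `IsLUB`. -/
def ompImpl {P : Type*} [PartialOrder P] [BoundedOrder P] (O : OrthomodularPoset P)
    (x y : P) : Set P :=
  {z | ∃ m ∈ maxElems (lowerBounds {O.compl x, O.compl y}), IsLUB {y, m} z}

/-!
If `x ≤ y` then `L(x', y') = ↓y'` has the single maximal element `y'`, so `x → y = {y ∨ y'} = {1}`;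
likewise `L(x', 1) = ↓x'` gives `x → 0 = {0 ∨ x'} = {x'}`. Conversely, finite height provides a
maximal `m ∈ L(x', y')`; if `x → y = {1}` then `y ∨ m = 1` with `m ⊥ y`, and the orthomodular law
forces `m = y'`, whence `y' ≤ x'` and `x ≤ y`.
-/

lemma maxElems_eq_setOf_maximal {P : Type*} [PartialOrder P] (s : Set P) :
    maxElems s = {m | Maximal (· ∈ s) m} :=
  Set.ext fun _ => maximal_mem_iff.symm

lemma IsGreatest.maxElems_eq {P : Type*} [PartialOrder P] {s : Set P} {a : P}
    (h : IsGreatest s a) : maxElems s = {a} := by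
  ext m
  rw [maxElems_eq_setOf_maximal, Set.mem_ofPred_eq, h.maximal_iff, Set.mem_singleton_iff]

lemma isGreatest_lowerBounds_pair_of_le {P : Type*} [Preorder P] {a b : P} (h : a ≤ b) :
    IsGreatest (lowerBounds {a, b}) a := by
  rw [lowerBounds_insert, lowerBounds_singleton, Set.inter_eq_left.2 (Set.Iic_subset_Iic.2 h)]
  exact isGreatest_Iic

lemma isLUB_bot_pair {P : Type*} [Preorder P] [OrderBot P] (a : P) : IsLUB {⊥, a} a :=
  IsGreatest.isLUB ⟨by simp, by simp [upperBounds]⟩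

lemma FiniteHeight.nonempty_maxElems {P : Type*} [PartialOrder P] (hfin : FiniteHeight P)
    {s : Set P} (hs : s.Nonempty) : (maxElems s).Nonempty := by
  obtain ⟨a, ha⟩ := hs
  have chain_bdd : ∀ c ⊆ s, IsChain (· ≤ ·) c → ∀ y ∈ c, ∃ ub ∈ s, ∀ z ∈ c, z ≤ ub := by
    intro c hcs hc y hy
    obtain ⟨ub, hub⟩ := (hfin c hc).exists_maximal ⟨y, hy⟩
    refine ⟨ub, hcs hub.prop, fun z hz => ?_⟩
    rcases hc.total hub.prop hz with h | h
    · exact hub.le_of_ge hz h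
    · exact h
  obtain ⟨m, -, hm⟩ := zorn_le_nonempty₀ s chain_bdd a ha
  exact ⟨m, by rwa [maxElems_eq_setOf_maximal]⟩

namespace OrthomodularPoset

variable {P : Type*} [PartialOrder P] [BoundedOrder P] (O : OrthomodularPoset P)

lemma compl_le_compl_iff {x y : P} : O.compl x ≤ O.compl y ↔ y ≤ x := by
  refine ⟨fun h => ?_, O.antitone y x⟩
  simpa only [O.involution] using O.antitone _ _ h

lemma compl_bot : O.compl ⊥ = ⊤ :=
  le_antisymm le_top ((O.lub_compl ⊥).2 (by simp))

lemma compl_top : O.compl ⊤ = ⊥ := by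
  rw [← O.compl_bot, O.involution]

lemma eq_compl_of_isLUB_top {m y : P} (hm : m ≤ O.compl y) (hlub : IsLUB {y, m} ⊤) :
    m = O.compl y := by
  refine O.orthomodular m (O.compl y) ⊤ m hm ?_ ?_
  · rwa [O.involution]
  · rw [O.compl_top]
    exact isLUB_bot_pair m

lemma ompImpl_eq_singleton {x y m j : P}
    (hm : IsGreatest (lowerBounds {O.compl x, O.compl y}) m) (hj : IsLUB {y, m} j) :
    ompImpl O x y = {j} := by
  ext z
  simp only [ompImpl, hm.maxElems_eq, Set.mem_singleton_iff, exists_eq_left, Set.mem_ofPred_eq]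
  exact ⟨fun hz => hz.unique hj, fun hz => hz ▸ hj⟩

lemma ompImpl_eq_top_of_le {x y : P} (h : x ≤ y) : ompImpl O x y = {⊤} := by
  refine O.ompImpl_eq_singleton ?_ (O.lub_compl y)
  rw [Set.pair_comm]
  exact isGreatest_lowerBounds_pair_of_le ((O.compl_le_compl_iff).2 h)

lemma ompImpl_bot (x : P) : ompImpl O x ⊥ = {O.compl x} := by
  refine O.ompImpl_eq_singleton ?_ (isLUB_bot_pair _)
  rw [O.compl_bot]
  exact isGreatest_lowerBounds_pair_of_le le_top

lemma le_of_ompImpl_eq_top (hfin : FiniteHeight P) {x y : P} (h : ompImpl O x y = {⊤}) :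
    x ≤ y := by
  obtain ⟨m, hm⟩ := hfin.nonempty_maxElems (s := lowerBounds {O.compl x, O.compl y})
    ⟨⊥, fun _ _ => bot_le⟩
  have hmy : m ≤ O.compl y := hm.1 (by simp)
  obtain ⟨j, hj⟩ := O.join_of_orth m y hmy
  rw [Set.pair_comm] at hj
  have hj_top : j = ⊤ := by
    have hj_mem : j ∈ ompImpl O x y := ⟨m, hm, hj⟩
    rwa [h] at hj_mem
  have hm_eq : m = O.compl y := O.eq_compl_of_isLUB_top hmy (hj_top ▸ hj)
  exact (O.compl_le_compl_iff).1 (hm_eq ▸ hm.1 (by simp))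

end OrthomodularPoset

/-- The orthomodular poset can be recovered from its assigned implication
operator (`ℙ(𝕀(𝐏)) = 𝐏`): the order is recovered via `x ≤ y ↔ x → y = {1}`
and the orthocomplementation via `x → 0 = {x'}`. -/
theorem omp_recover {P : Type*} [PartialOrder P] [BoundedOrder P]
    (O : OrthomodularPoset P) (hfin : FiniteHeight P) :
    (∀ x y : P, ompImpl O x y = {⊤} ↔ x ≤ y) ∧
    (∀ x : P, ompImpl O x ⊥ = {O.compl x}) := by
  exact ⟨fun x y => ⟨O.le_of_ompImpl_eq_top hfin, O.ompImpl_eq_top_of_le⟩, O.ompImpl_bot⟩
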